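/- Let χ = Σ_{i≠j} a_{i,j} χ_{i,j} be a generic character of PΣ_3 (no nontrivial {-1,0,1}-linear dependence among the a_{i,j}). Then the ascending subgraph I_3^↑(χ) of I_3 — the full subgraph on ascending symmetric ideal edges — has exactly nine vertices (six depots and three hubs), each ascending hub has degree at least three in I_3^↑(χ), hence I_3^↑(χ) has at least nine edges and therefore contains a nontrivial cycle (is not a forest), and moreover I_3^↑(χ) is connected. -/

import Mathlib

/-- `A` splits the pair `{i, ī}`. -/
def Splits (A : Finset (Fin 3 × Bool)) (i : Fin 3) : Prop :=
  Xor' ((i, false) ∈ A) ((i, true) ∈ A)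

/-- Symmetric ideal edge on `E = {1,1̄,2,2̄,3,3̄}`. -/
def IsSIE (A : Finset (Fin 3 × Bool)) : Prop :=
  2 ≤ A.card ∧ A ≠ Finset.univ ∧ ∃! i : Fin 3, Splits A i

/-- Compatibility of ideal edges. -/
def Compat (A B : Finset (Fin 3 × Bool)) : Prop :=
  A ⊆ B ∨ B ⊆ A ∨ Disjoint A B

/-- The character `χ = Σ_{i≠j} a_{i,j} χ_{i,j}` is generic: no nontrivial
`{-1,0,1}`-linear dependence among the `a_{i,j}` (`i ≠ j`). -/
def Generic (a : Fin 3 → Fin 3 → ℝ) : Prop :=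
  ∀ ε : Fin 3 → Fin 3 → ℤ, (∀ i j, ε i j = -1 ∨ ε i j = 0 ∨ ε i j = 1) →
    (∑ i : Fin 3, ∑ j ∈ Finset.univ \ {i}, (ε i j : ℝ) * a i j) = 0 →
    ∀ i j, i ≠ j → ε i j = 0

/-- A symmetric ideal edge `A` with split pair `{j, j̄}` and
`I = {i ≠ j : {i, ī} ⊆ A}` is ascending for `χ` if `j ∈ A` and `Σ_{i∈I} a_{i,j} > 0`,
or `j̄ ∈ A` and `Σ_{i∈I} a_{i,j} < 0`. -/
def IsAscFor (a : Fin 3 → Fin 3 → ℝ) (A : Finset (Fin 3 × Bool)) : Prop :=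
  IsSIE A ∧ ∃ j : Fin 3, Splits A j ∧
    (((j, false) ∈ A ∧
        0 < ∑ i ∈ Finset.univ.filter (fun i : Fin 3 => i ≠ j ∧ (i, false) ∈ A), a i j) ∨
      ((j, true) ∈ A ∧
        (∑ i ∈ Finset.univ.filter (fun i : Fin 3 => i ≠ j ∧ (i, false) ∈ A), a i j) < 0))

/-- The ascending subgraph `I_3^↑(χ)`: the full subgraph of `I_3` on the ascending
symmetric ideal edges, with adjacency given by compatibility. -/
def AscGraph (a : Fin 3 → Fin 3 → ℝ) :
    SimpleGraph {A : Finset (Fin 3 × Bool) // IsAscFor a A} where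
  Adj A B := A ≠ B ∧ Compat A.1 B.1
  symm := by
    constructor
    intro A B hAB
    refine ⟨hAB.1.symm, ?_⟩
    rcases hAB.2 with h | h | h
    · exact Or.inr (Or.inl h)
    · exact Or.inl h
    · exact Or.inr (Or.inr h.symm)
  loopless := ⟨fun A hA => hA.1 rfl⟩

/-!
Every symmetric ideal edge of `E` is a depot `{i, ī, j}` or `{i, ī, j̄}`, or a hub `E \ {j}` or
`E \ {j̄}`. Whether it is ascending depends only on the sign of `a i j` (depot) or of the column
sum `Σ_{i ≠ j} a i j` (hub); genericity makes these nonzero, so exactly one of each pair is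
ascending, giving six depots and three hubs. The hub split at `j` contains both depots whose
pair avoids `j`, and also a depot split at `j`, because the column sum has the sign of one of its
two terms. These nine hub-depot incidences connect the graph, and a connected graph on nine
vertices with nine edges is not a tree.
-/

open Finset

instance (A : Finset (Fin 3 × Bool)) (i : Fin 3) : Decidable (Splits A i) :=
  inferInstanceAs
    (Decidable (((i, false) ∈ A ∧ (i, true) ∉ A) ∨ ((i, true) ∈ A ∧ (i, false) ∉ A)))

instance (A : Finset (Fin 3 × Bool)) : Decidable (IsSIE A) :=
  inferInstanceAs
    (Decidable (2 ≤ A.card ∧ A ≠ univ ∧ ∃ i, Splits A i ∧ ∀ k, Splits A k → k = i))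

namespace SimpleGraph

variable {V : Type*} {G : SimpleGraph V}

theorem reachable_of_forall_exists_ne_reachable {h : Fin 3 → V}
    (hh : ∀ j, ∃ k ≠ j, G.Reachable (h j) (h k)) (j k : Fin 3) : G.Reachable (h j) (h k) := by
  choose f hf hreach using hh
  have key : ∀ j k j' k' : Fin 3, j' ≠ j → k' ≠ k → j = k ∨ j' = k ∨ k' = j ∨ j' = k' := by
    decide
  rcases key j k (f j) (f k) (hf j) (hf k) with rfl | hjk | hkj | heq
  · rfl
  · exact hjk ▸ hreach j
  · exact (hkj ▸ hreach k).symm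
  · exact (hreach j).trans (heq ▸ (hreach k).symm)

theorem card_adj_eq_two_mul_card_edgeSet [Finite V] (G : SimpleGraph V) :
    Nat.card {p : V × V // G.Adj p.1 p.2} = 2 * Nat.card G.edgeSet := by
  classical
  have := Fintype.ofFinite V
  let e : {p : V × V // G.Adj p.1 p.2} ≃ G.Dart :=
    ⟨fun p => ⟨p.1, p.2⟩, fun d => ⟨d.toProd, d.adj⟩, fun _ => rfl, fun _ => rfl⟩
  rw [Nat.card_congr e, Nat.card_eq_fintype_card, dart_card_eq_twice_card_edges,
    Nat.card_eq_fintype_card, edgeFinset_card]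

theorem Connected.not_isAcyclic_of_card_le [Finite V] (hG : G.Connected)
    (h : 2 * Nat.card V ≤ Nat.card {p : V × V // G.Adj p.1 p.2}) : ¬ G.IsAcyclic := by
  intro hacyc
  have htree := (isTree_iff_connected_and_card.1 ⟨hG, hacyc⟩).2
  rw [card_adj_eq_two_mul_card_edgeSet] at h
  omega

theorem two_mul_card_mul_card_le_card_adj [Finite V] {ι κ : Type*} {h : ι → V} {N : ι → κ → V}
    (hh : Function.Injective h) (hN : ∀ i, Function.Injective (N i))
    (hadj : ∀ i t, G.Adj (h i) (N i t)) (hsep : ∀ i t i', N i t ≠ h i') :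
    2 * (Nat.card ι * Nat.card κ) ≤ Nat.card {p : V × V // G.Adj p.1 p.2} := by
  let f : Bool × ι × κ → {p : V × V // G.Adj p.1 p.2} := fun x =>
    cond x.1 ⟨(h x.2.1, N x.2.1 x.2.2), hadj _ _⟩ ⟨(N x.2.1 x.2.2, h x.2.1), (hadj _ _).symm⟩
  have hf : Function.Injective f := by
    rintro ⟨_ | _, i, t⟩ ⟨_ | _, i', t'⟩ hx <;>
      simp only [f, cond_true, cond_false, Subtype.mk.injEq, Prod.mk.injEq] at hx
    · obtain rfl := hh hx.2
      rw [hN i hx.1]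
    · exact absurd hx.1 (hsep i t i')
    · exact absurd hx.1.symm (hsep i' t' i)
    · obtain rfl := hh hx.1
      rw [hN i hx.2]
  simpa [Nat.card_prod] using Nat.card_le_card_of_injective f hf

end SimpleGraph

namespace IdealEdge

def depot (i j : Fin 3) (b : Bool) : Finset (Fin 3 × Bool) := {(i, false), (i, true), (j, b)}

def hub (j : Fin 3) (b : Bool) : Finset (Fin 3 × Bool) := {(j, !b)}ᶜ

theorem isSIE_iff (A : Finset (Fin 3 × Bool)) :
    IsSIE A ↔ (∃ i j b, i ≠ j ∧ A = depot i j b) ∨ ∃ j b, A = hub j b := by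
  revert A; decide

theorem isSIE_depot : ∀ {i j : Fin 3} (b : Bool), i ≠ j → IsSIE (depot i j b) := by decide

theorem isSIE_hub : ∀ (j : Fin 3) (b : Bool), IsSIE (hub j b) := by decide

theorem splits_depot : ∀ {i j : Fin 3} (b : Bool), i ≠ j → Splits (depot i j b) j := by decide

theorem splits_hub : ∀ (j : Fin 3) (b : Bool), Splits (hub j b) j := by decide

theorem mem_depot (i j : Fin 3) (b : Bool) : (j, b) ∈ depot i j b := by simp [depot]

theorem mem_hub (j : Fin 3) (b : Bool) : (j, b) ∈ hub j b := by simp [hub]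

theorem filter_depot : ∀ {i j : Fin 3} (b : Bool), i ≠ j →
    univ.filter (fun k : Fin 3 => k ≠ j ∧ (k, false) ∈ depot i j b) = {i} := by decide

theorem filter_hub : ∀ (j : Fin 3) (b : Bool),
    univ.filter (fun k : Fin 3 => k ≠ j ∧ (k, false) ∈ hub j b) = univ.erase j := by decide

theorem card_depot : ∀ {i j : Fin 3} (b : Bool), i ≠ j → (depot i j b).card = 3 := by decide

theorem card_hub : ∀ (j : Fin 3) (b : Bool), (hub j b).card = 5 := by decide

theorem eq_of_depot_eq_depot : ∀ {i j i' j' : Fin 3} {b b' : Bool}, i ≠ j → i' ≠ j' →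
    depot i j b = depot i' j' b' → i = i' ∧ j = j' := by decide

theorem eq_of_hub_eq_hub : ∀ {j j' : Fin 3} {b b' : Bool}, hub j b = hub j' b' → j = j' := by
  decide

theorem depot_ssubset_hub : ∀ {i j k : Fin 3} (b c : Bool), i ≠ k → j ≠ k →
    depot i j b ⊂ hub k c := by decide

theorem depot_ssubset_hub_self : ∀ {i j : Fin 3} (b : Bool), i ≠ j → depot i j b ⊂ hub j b := by
  decide

end IdealEdge

open IdealEdge

def ascSum (a : Fin 3 → Fin 3 → ℝ) (A : Finset (Fin 3 × Bool)) (j : Fin 3) : ℝ :=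
  ∑ i ∈ univ.filter (fun i : Fin 3 => i ≠ j ∧ (i, false) ∈ A), a i j

theorem isAscFor_iff_of_splits {a : Fin 3 → Fin 3 → ℝ} {A : Finset (Fin 3 × Bool)} {j : Fin 3}
    {b : Bool} (hA : IsSIE A) (hj : Splits A j) (hb : (j, b) ∈ A) (hsum : ascSum a A j ≠ 0) :
    IsAscFor a A ↔ b = decide (ascSum a A j < 0) := by
  have hmem : ∀ c, (j, c) ∈ A ↔ c = b := by
    have hj : ((j, false) ∈ A ∧ (j, true) ∉ A) ∨ ((j, true) ∈ A ∧ (j, false) ∉ A) := hj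
    intro c
    cases b <;> cases c <;> tauto
  have hasc : IsAscFor a A ↔
      ((j, false) ∈ A ∧ 0 < ascSum a A j) ∨ ((j, true) ∈ A ∧ ascSum a A j < 0) := by
    refine ⟨fun ⟨_, k, hk, h⟩ => ?_, fun h => ⟨hA, j, hj, h⟩⟩
    obtain rfl := hA.2.2.unique hk hj
    exact h
  rw [hasc, hmem, hmem]
  rcases hsum.lt_or_gt with hs | hs <;> cases b <;> simp [hs, hs.not_gt]

def colSum (a : Fin 3 → Fin 3 → ℝ) (j : Fin 3) : ℝ := ∑ i ∈ univ.erase j, a i j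

namespace Generic

variable {a : Fin 3 → Fin 3 → ℝ}

theorem sum_ne_zero (hgen : Generic a) {S : Finset (Fin 3 × Fin 3)} (hS : ∀ p ∈ S, p.1 ≠ p.2)
    (hne : S.Nonempty) : ∑ p ∈ S, a p.1 p.2 ≠ 0 := by
  intro hzero
  obtain ⟨p, hp⟩ := hne
  let ε : Fin 3 → Fin 3 → ℤ := fun i j => if (i, j) ∈ S then 1 else 0
  have hε : ∀ i j, ε i j = -1 ∨ ε i j = 0 ∨ ε i j = 1 := fun i j => by
    by_cases h : (i, j) ∈ S <;> simp [ε, h]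
  have hdiag : ∀ i, ∑ j ∈ univ \ {i}, (ε i j : ℝ) * a i j = ∑ j, (ε i j : ℝ) * a i j := by
    intro i
    refine sum_subset (subset_univ _) fun j _ hj => ?_
    obtain rfl : j = i := by simpa using hj
    simp [ε, show (j, j) ∉ S from fun h => hS _ h rfl]
  have hsum : ∑ i : Fin 3, ∑ j ∈ univ \ {i}, (ε i j : ℝ) * a i j = 0 := by
    simp_rw [hdiag, ← Fintype.sum_prod_type', ε]
    simpa [sum_ite_mem] using hzero
  simpa [ε, hp] using hgen ε hε hsum p.1 p.2 (hS p hp)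

theorem ne_zero (hgen : Generic a) {i j : Fin 3} (hij : i ≠ j) : a i j ≠ 0 := by
  simpa using hgen.sum_ne_zero (S := {(i, j)}) (by simpa using hij) (singleton_nonempty _)

theorem colSum_ne_zero (hgen : Generic a) (j : Fin 3) : colSum a j ≠ 0 := by
  simpa [colSum, sum_product] using hgen.sum_ne_zero (S := univ.erase j ×ˢ {j})
    (fun p hp => by rw [mem_product, mem_erase, mem_singleton] at hp; exact hp.2 ▸ hp.1.1)
    (univ_nontrivial.erase_nonempty.product (singleton_nonempty j))

end Generic

theorem exists_decide_lt_eq_colSum (a : Fin 3 → Fin 3 → ℝ) (j : Fin 3) :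
    ∃ i, ∃ _ : i ≠ j, decide (a i j < 0) = decide (colSum a j < 0) := by
  by_cases hs : colSum a j < 0
  · obtain ⟨i, hi, hlt⟩ := exists_lt_of_sum_lt (s := univ.erase j) (f := fun i => a i j)
      (g := fun _ => 0) (by simpa [colSum] using hs)
    exact ⟨i, ne_of_mem_erase hi, by simp [hs, hlt]⟩
  · obtain ⟨i, hi, hle⟩ := exists_le_of_sum_le (s := univ.erase j) (f := fun _ => 0)
      (g := fun i => a i j) univ_nontrivial.erase_nonempty (by simpa [colSum] using hs)
    exact ⟨i, ne_of_mem_erase hi, by simp [hs, hle]⟩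

section AscVertices

variable {a : Fin 3 → Fin 3 → ℝ}

theorem ascSum_depot {i j : Fin 3} (b : Bool) (hij : i ≠ j) :
    ascSum a (depot i j b) j = a i j := by
  rw [ascSum, filter_depot b hij, sum_singleton]

theorem ascSum_hub (j : Fin 3) (b : Bool) : ascSum a (hub j b) j = colSum a j := by
  rw [ascSum, filter_hub j b, colSum]

theorem isAscFor_depot_iff {i j : Fin 3} {b : Bool} (hij : i ≠ j) (ha : a i j ≠ 0) :
    IsAscFor a (depot i j b) ↔ b = decide (a i j < 0) := by
  rw [isAscFor_iff_of_splits (isSIE_depot b hij) (splits_depot b hij) (mem_depot i j b)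
    (by rwa [ascSum_depot b hij]), ascSum_depot b hij]

theorem isAscFor_hub_iff {j : Fin 3} {b : Bool} (hs : colSum a j ≠ 0) :
    IsAscFor a (hub j b) ↔ b = decide (colSum a j < 0) := by
  rw [isAscFor_iff_of_splits (isSIE_hub j b) (splits_hub j b) (mem_hub j b)
    (by rwa [ascSum_hub]), ascSum_hub]

variable (hgen : Generic a)

noncomputable def ascDepot (i j : Fin 3) (hij : i ≠ j) : {A // IsAscFor a A} :=
  ⟨depot i j (decide (a i j < 0)), (isAscFor_depot_iff hij (hgen.ne_zero hij)).2 rfl⟩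

noncomputable def ascHub (j : Fin 3) : {A // IsAscFor a A} :=
  ⟨hub j (decide (colSum a j < 0)), (isAscFor_hub_iff (hgen.colSum_ne_zero j)).2 rfl⟩

theorem card_ascDepot {i j : Fin 3} (hij : i ≠ j) : (ascDepot hgen i j hij).1.card = 3 :=
  card_depot _ hij

theorem card_ascHub (j : Fin 3) : (ascHub hgen j).1.card = 5 :=
  card_hub _ _

theorem ascDepot_inj {i j i' j' : Fin 3} {hij : i ≠ j} {hij' : i' ≠ j'} :
    ascDepot hgen i j hij = ascDepot hgen i' j' hij' ↔ i = i' ∧ j = j' := by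
  refine ⟨fun h => eq_of_depot_eq_depot hij hij' (congrArg Subtype.val h), ?_⟩
  rintro ⟨rfl, rfl⟩
  rfl

theorem ascHub_injective : Function.Injective (ascHub hgen) :=
  fun _ _ h => eq_of_hub_eq_hub (congrArg Subtype.val h)

theorem ascDepot_or_ascHub (v : {A // IsAscFor a A}) :
    (∃ i j, ∃ hij : i ≠ j, v = ascDepot hgen i j hij) ∨ ∃ j, v = ascHub hgen j := by
  obtain ⟨A, hA⟩ := v
  rcases (isSIE_iff A).1 hA.1 with ⟨i, j, b, hij, rfl⟩ | ⟨j, b, rfl⟩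
  · obtain rfl := (isAscFor_depot_iff hij (hgen.ne_zero hij)).1 hA
    exact Or.inl ⟨i, j, hij, rfl⟩
  · obtain rfl := (isAscFor_hub_iff (hgen.colSum_ne_zero j)).1 hA
    exact Or.inr ⟨j, rfl⟩

theorem exists_eq_ascHub_of_card_eq_five {v : {A // IsAscFor a A}} (hv : v.1.card = 5) :
    ∃ j, v = ascHub hgen j := by
  rcases ascDepot_or_ascHub hgen v with ⟨i, j, hij, rfl⟩ | hhub
  · exact absurd (card_ascDepot hgen hij ▸ hv) (by decide)
  · exact hhub

abbrev AscIndex := {p : Fin 3 × Fin 3 // p.1 ≠ p.2} ⊕ Fin 3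

def AscIndex.card : AscIndex → ℕ := Sum.elim (fun _ => 3) (fun _ => 5)

noncomputable def ascVertex : AscIndex → {A // IsAscFor a A} :=
  Sum.elim (fun p => ascDepot hgen p.1.1 p.1.2 p.2) (ascHub hgen)

theorem card_ascVertex (x : AscIndex) : (ascVertex hgen x).1.card = AscIndex.card x := by
  rcases x with ⟨_, hij⟩ | j
  · exact card_ascDepot hgen hij
  · exact card_ascHub hgen j

theorem ascVertex_bijective : Function.Bijective (ascVertex hgen) := by
  refine ⟨fun x y h => ?_, fun v => ?_⟩
  · have hcard := card_ascVertex hgen x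
    rw [h, card_ascVertex] at hcard
    rcases x with ⟨⟨i, j⟩, hij⟩ | j <;> rcases y with ⟨⟨i', j'⟩, hij'⟩ | j' <;>
      simp only [AscIndex.card, Sum.elim_inl, Sum.elim_inr] at hcard <;> norm_num at hcard
    · obtain ⟨rfl, rfl⟩ := eq_of_depot_eq_depot hij hij' (congrArg Subtype.val h)
      rfl
    · rw [ascHub_injective hgen h]
  · rcases ascDepot_or_ascHub hgen v with ⟨i, j, hij, rfl⟩ | ⟨j, rfl⟩
    exacts [⟨Sum.inl ⟨(i, j), hij⟩, rfl⟩, ⟨Sum.inr j, rfl⟩]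

theorem card_ascFor (hgen : Generic a) : Nat.card {A // IsAscFor a A} = 9 := by
  rw [← Nat.card_congr (Equiv.ofBijective _ (ascVertex_bijective hgen)), Nat.card_eq_fintype_card]
  rfl

theorem card_ascFor_and_card_eq (hgen : Generic a) (k : ℕ) :
    Nat.card {A // IsAscFor a A ∧ A.card = k} = Nat.card {x : AscIndex // AscIndex.card x = k} :=
  Nat.card_congr <| (Equiv.subtypeSubtypeEquivSubtypeInter _ _).symm.trans
    (Equiv.subtypeEquiv (Equiv.ofBijective _ (ascVertex_bijective hgen))
      fun x => by rw [Equiv.ofBijective_apply, card_ascVertex]).symm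

end AscVertices

theorem AscGraph.adj_of_ssubset {a : Fin 3 → Fin 3 → ℝ} {A B : {A // IsAscFor a A}}
    (h : B.1 ⊂ A.1) : (AscGraph a).Adj A B :=
  ⟨fun hAB => h.ne (congrArg Subtype.val hAB).symm, Or.inr (Or.inl h.subset)⟩

section AscGraph

variable {a : Fin 3 → Fin 3 → ℝ} (hgen : Generic a)

theorem ascHub_adj_ascDepot {i j k : Fin 3} (hij : i ≠ j) (hik : i ≠ k) (hjk : j ≠ k) :
    (AscGraph a).Adj (ascHub hgen k) (ascDepot hgen i j hij) :=
  AscGraph.adj_of_ssubset (depot_ssubset_hub _ _ hik hjk)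

theorem ascHub_adj_ascDepot_of_decide_eq {i j : Fin 3} (hij : i ≠ j)
    (h : decide (a i j < 0) = decide (colSum a j < 0)) :
    (AscGraph a).Adj (ascHub hgen j) (ascDepot hgen i j hij) := by
  refine AscGraph.adj_of_ssubset ?_
  show depot i j (decide (a i j < 0)) ⊂ hub j (decide (colSum a j < 0))
  rw [h]
  exact depot_ssubset_hub_self _ hij

theorem exists_three_adj_ascHub (j : Fin 3) :
    ∃ N : Fin 3 → {A // IsAscFor a A}, Function.Injective N ∧
      ∀ t, (AscGraph a).Adj (ascHub hgen j) (N t) ∧ (N t).1.card = 3 := by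
  obtain ⟨p, hpj, -⟩ := Fin.exists_ne_and_ne_of_two_lt j j (by norm_num)
  obtain ⟨q, hqp, hqj⟩ := Fin.exists_ne_and_ne_of_two_lt p j (by norm_num)
  obtain ⟨r, hrj, hr⟩ := exists_decide_lt_eq_colSum a j
  refine ⟨![ascDepot hgen p q hqp.symm, ascDepot hgen q p hqp, ascDepot hgen r j hrj], ?_, ?_⟩
  · intro t t' h
    fin_cases t <;> fin_cases t' <;> simp_all [ascDepot_inj]
  · intro t
    fin_cases t
    · exact ⟨ascHub_adj_ascDepot hgen hqp.symm hpj hqj, card_ascDepot hgen hqp.symm⟩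
    · exact ⟨ascHub_adj_ascDepot hgen hqp hqj hpj, card_ascDepot hgen hqp⟩
    · exact ⟨ascHub_adj_ascDepot_of_decide_eq hgen hrj hr, card_ascDepot hgen hrj⟩

theorem three_le_card_adj_ascHub (j : Fin 3) :
    3 ≤ Nat.card {B // (AscGraph a).Adj (ascHub hgen j) B} := by
  obtain ⟨N, hinj, hN⟩ := exists_three_adj_ascHub hgen j
  simpa using Nat.card_le_card_of_injective (fun t => (⟨N t, (hN t).1⟩ :
    {B // (AscGraph a).Adj (ascHub hgen j) B})) fun t t' h => hinj (congrArg Subtype.val h)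

theorem eighteen_le_card_adj_ascGraph (hgen : Generic a) :
    18 ≤ Nat.card {p : {A // IsAscFor a A} × {A // IsAscFor a A} // (AscGraph a).Adj p.1 p.2} := by
  choose N hinj hN using exists_three_adj_ascHub hgen
  have hsep : ∀ j t k, N j t ≠ ascHub hgen k := fun j t k h => by
    simpa [(hN j t).2, card_ascHub] using congrArg (fun v => v.1.card) h
  simpa using (AscGraph a).two_mul_card_mul_card_le_card_adj (ascHub_injective hgen) hinj
    (fun j t => (hN j t).1) hsep

theorem exists_ne_reachable_ascHub (j : Fin 3) :
    ∃ k ≠ j, (AscGraph a).Reachable (ascHub hgen j) (ascHub hgen k) := by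
  obtain ⟨i, hij, hsign⟩ := exists_decide_lt_eq_colSum a j
  obtain ⟨k, hki, hkj⟩ := Fin.exists_ne_and_ne_of_two_lt i j (by norm_num)
  exact ⟨k, hkj, (ascHub_adj_ascDepot_of_decide_eq hgen hij hsign).reachable.trans
    (ascHub_adj_ascDepot hgen hij hki.symm hkj.symm).symm.reachable⟩

theorem ascGraph_connected (hgen : Generic a) : (AscGraph a).Connected := by
  have to_hub : ∀ v, ∃ j, (AscGraph a).Reachable v (ascHub hgen j) := by
    intro v
    rcases ascDepot_or_ascHub hgen v with ⟨i, j, hij, rfl⟩ | ⟨j, rfl⟩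
    · obtain ⟨k, hki, hkj⟩ := Fin.exists_ne_and_ne_of_two_lt i j (by norm_num)
      exact ⟨k, (ascHub_adj_ascDepot hgen hij hki.symm hkj.symm).symm.reachable⟩
    · exact ⟨j, .rfl⟩
  refine (SimpleGraph.connected_iff _).2 ⟨fun u v => ?_, ⟨ascHub hgen 0⟩⟩
  obtain ⟨j, hu⟩ := to_hub u
  obtain ⟨k, hv⟩ := to_hub v
  exact hu.trans <| (SimpleGraph.reachable_of_forall_exists_ne_reachable
    (exists_ne_reachable_ascHub hgen) j k).trans hv.symm

end AscGraph

/-- For a generic character `χ` of `PΣ_3`, the ascending graph `I_3^↑(χ)` has exactly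
nine vertices (six depots, of size 3, and three hubs, of size 5), each ascending hub has
degree at least three, the graph has at least nine edges (i.e. at least eighteen ordered
adjacent pairs), hence contains a nontrivial cycle (is not acyclic), and moreover it is
connected. -/
theorem stmt18 (a : Fin 3 → Fin 3 → ℝ) (hgen : Generic a) :
    Nat.card {A : Finset (Fin 3 × Bool) // IsAscFor a A} = 9 ∧
    Nat.card {A : Finset (Fin 3 × Bool) // IsAscFor a A ∧ A.card = 3} = 6 ∧
    Nat.card {A : Finset (Fin 3 × Bool) // IsAscFor a A ∧ A.card = 5} = 3 ∧
    (∀ H : {A : Finset (Fin 3 × Bool) // IsAscFor a A}, H.1.card = 5 →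
      3 ≤ Nat.card {B : {A : Finset (Fin 3 × Bool) // IsAscFor a A} //
        (AscGraph a).Adj H B}) ∧
    18 ≤ Nat.card {p : {A : Finset (Fin 3 × Bool) // IsAscFor a A} ×
        {A : Finset (Fin 3 × Bool) // IsAscFor a A} // (AscGraph a).Adj p.1 p.2} ∧
    ¬ (AscGraph a).IsAcyclic ∧
    (AscGraph a).Connected := by
  have hconn := ascGraph_connected hgen
  have hpairs := eighteen_le_card_adj_ascGraph hgen
  refine ⟨card_ascFor hgen, ?_, ?_, fun H hH => ?_, hpairs, ?_, hconn⟩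
  · rw [card_ascFor_and_card_eq hgen, Nat.card_eq_fintype_card]
    rfl
  · rw [card_ascFor_and_card_eq hgen, Nat.card_eq_fintype_card]
    rfl
  · obtain ⟨j, rfl⟩ := exists_eq_ascHub_of_card_eq_five hgen hH
    exact three_le_card_adj_ascHub hgen j
  · exact hconn.not_isAcyclic_of_card_le (by rw [card_ascFor hgen]; exact hpairs)
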